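/- Let A_{z̄} : ℂ → Matrix (Fin N) (Fin N) ℂ be continuous and set A_z := (A_{z̄})ᴴ pointwise. Let H : ℂ → Matrix (Fin N) (Fin Nf) ℂ be continuously real-differentiable with D_{z̄}H := ∂_{z̄}H + i·A_{z̄}·H = 0 everywhere. Let α : ℂ → Matrix (Fin N) (Fin Nf) ℂ and β : ℂ → Matrix (Fin N) (Fin N) ℂ be continuously real-differentiable with compact support, and suppose D_zα := ∂_zα + i·A_z·α = 0 everywhere. Then, with D_{z̄}(βᴴ) := ∂_{z̄}(βᴴ) + i·[A_{z̄}, βᴴ], the following L² orthogonality identity holds: ∫_ℂ tr[(D_{z̄}(βᴴ) + i·√2·α·Hᴴ)ᴴ·(D_{z̄}(βᴴ) + i·√2·α·Hᴴ)] = ∫_ℂ tr[(D_{z̄}(βᴴ))ᴴ·(D_{z̄}(βᴴ))] + 2·∫_ℂ tr[(α·Hᴴ)ᴴ·(α·Hᴴ)]. In particular, if D_{z̄}(βᴴ) + i·√2·α·Hᴴ = 0 everywhere, then α·Hᴴ = 0 and D_{z̄}(βᴴ) = 0 everywhere. -/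

import Mathlib

/-!
Write `e = g + c • aH` with `c = i√2`, so that `|c|² = 2`. Pointwise,
`tr(eᴴe) = tr(gᴴg) + 2 Re (c tr(gᴴ aH)) + |c|² tr(aHᴴaH)`. The equations `D_z α = 0` and
`D_{z̄} H = 0` give `D_z(αHᴴ) = 0` for the adjoint action, so the covariant Leibniz rule and
cyclicity of the trace turn `tr(gᴴ aH)` into the total derivative `∂_z tr(β aH)` of a compactly
supported function, whose integral vanishes. When `e = 0` the two remaining integrals are
nonnegative with zero sum, hence both vanish, and so do their continuous nonnegative integrands.
-/

open Matrix Complex MeasureTheory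

attribute [local instance] Matrix.frobeniusNormedAddCommGroup Matrix.frobeniusNormedSpace

/-- The Wirtinger derivative `∂_z f (w) = (1/2)(Df(w)[1] − i·Df(w)[i])`. -/
noncomputable def dz {E : Type*} [NormedAddCommGroup E] [NormedSpace ℂ E]
    (f : ℂ → E) (w : ℂ) : E :=
  (2 : ℂ)⁻¹ • (fderiv ℝ f w 1 - Complex.I • fderiv ℝ f w Complex.I)

/-- The Wirtinger derivative `∂_{z̄} f (w) = (1/2)(Df(w)[1] + i·Df(w)[i])`. -/
noncomputable def dzbar {E : Type*} [NormedAddCommGroup E] [NormedSpace ℂ E]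
    (f : ℂ → E) (w : ℂ) : E :=
  (2 : ℂ)⁻¹ • (fderiv ℝ f w 1 + Complex.I • fderiv ℝ f w Complex.I)

open scoped ComplexOrder ComplexConjugate

theorem HasCompactSupport.mono_of_eq_zero {X M N : Type*} [TopologicalSpace X] [Zero M] [Zero N]
    {f : X → M} {g : X → N} (hf : HasCompactSupport f) (h : ∀ x, f x = 0 → g x = 0) :
    HasCompactSupport g :=
  hf.mono <| Function.support_subset_iff'.2 fun x hx => h x (Function.notMem_support.1 hx)

section Wirtinger

variable {E F G : Type*} [NormedAddCommGroup E] [NormedSpace ℂ E]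
  [NormedAddCommGroup F] [NormedSpace ℂ F] [NormedAddCommGroup G] [NormedSpace ℂ G]
  {f : ℂ → E} {g : ℂ → F} {z : ℂ}

theorem dz_clm_comp (L : E →L[ℂ] F) (hf : DifferentiableAt ℝ f z) :
    dz (fun w => L (f w)) z = L (dz f z) := by
  have h : fderiv ℝ (fun w => L (f w)) z = (L.restrictScalars ℝ).comp (fderiv ℝ f z) :=
    ((L.restrictScalars ℝ).hasFDerivAt.comp z hf.hasFDerivAt).fderiv
  simp [dz, h]

theorem dz_bilinear (B : E →L[ℂ] F →L[ℂ] G) (hf : DifferentiableAt ℝ f z)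
    (hg : DifferentiableAt ℝ g z) :
    dz (fun w => B (f w) (g w)) z = B (dz f z) (g z) + B (f z) (dz g z) := by
  have h : ∀ v, fderiv ℝ (fun w => B (f w) (g w)) z v
      = B (f z) (fderiv ℝ g z v) + B (fderiv ℝ f z v) (g z) := fun v =>
    congrArg (· v) ((B.bilinearRestrictScalars ℝ).fderiv_of_bilinear hf hg)
  simp only [dz, h, map_sub, map_smul, _root_.sub_apply, _root_.smul_apply]
  module

theorem fderiv_conjLinear_comp_apply (S : E →ₗ⋆[ℂ] F) (hS : Continuous S)
    (hf : DifferentiableAt ℝ f z) (v : ℂ) :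
    fderiv ℝ (fun w => S (f w)) z v = S (fderiv ℝ f z v) := by
  let SR : E →L[ℝ] F :=
    { toFun := S
      map_add' := S.map_add
      map_smul' := fun r x => by simpa using S.map_smulₛₗ (r : ℂ) x
      cont := hS }
  exact congrArg (· v) (SR.hasFDerivAt.comp z hf.hasFDerivAt).fderiv

theorem dz_conjLinear_comp (S : E →ₗ⋆[ℂ] F) (hS : Continuous S)
    (hf : DifferentiableAt ℝ f z) : dz (fun w => S (f w)) z = S (dzbar f z) := by
  simp [dz, dzbar, fderiv_conjLinear_comp_apply S hS hf, sub_eq_add_neg, map_ofNat]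

theorem dzbar_conjLinear_comp (S : E →ₗ⋆[ℂ] F) (hS : Continuous S)
    (hf : DifferentiableAt ℝ f z) : dzbar (fun w => S (f w)) z = S (dz f z) := by
  simp [dz, dzbar, fderiv_conjLinear_comp_apply S hS hf, sub_eq_add_neg, map_ofNat]

theorem HasCompactSupport.dzbar (hf : HasCompactSupport f) : HasCompactSupport (dzbar f) :=
  (hf.fderiv ℝ).comp_left (g := fun L : ℂ →L[ℝ] E => (2 : ℂ)⁻¹ • (L 1 + I • L I)) (by simp)

theorem continuous_fderiv_apply_of_contDiff (hf : ContDiff ℝ 1 f) (v : ℂ) :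
    Continuous fun w => fderiv ℝ f w v :=
  (hf.continuous_fderiv_apply one_ne_zero).comp (continuous_id.prodMk continuous_const)

theorem ContDiff.continuous_dzbar (hf : ContDiff ℝ 1 f) : Continuous (dzbar f) :=
  ((continuous_fderiv_apply_of_contDiff hf 1).add
    ((continuous_fderiv_apply_of_contDiff hf I).const_smul I)).const_smul _

theorem integrable_fderiv_apply (hf : ContDiff ℝ 1 f) (hs : HasCompactSupport f) (v : ℂ) :
    Integrable fun w => fderiv ℝ f w v :=
  (continuous_fderiv_apply_of_contDiff hf v).integrable_of_hasCompactSupport (hs.fderiv_apply ℝ v)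

theorem integral_fderiv_apply_eq_zero [CompleteSpace E] (hf : ContDiff ℝ 1 f)
    (hs : HasCompactSupport f) (v : ℂ) : ∫ w, fderiv ℝ f w v = 0 := by
  simpa using integral_smul_fderiv_eq_neg_fderiv_smul_of_integrable (μ := volume) (v := v)
    (f := fun _ => (1 : ℝ)) (by simp) (by simpa using integrable_fderiv_apply hf hs v)
    (by simpa using hf.continuous.integrable_of_hasCompactSupport hs)
    (fun _ _ => differentiableAt_const _) (fun w _ => hf.differentiable one_ne_zero w)

theorem integral_dz_eq_zero [CompleteSpace E] (hf : ContDiff ℝ 1 f)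
    (hs : HasCompactSupport f) : ∫ w, dz f w = 0 := by
  simp only [dz]
  rw [integral_smul, integral_sub (integrable_fderiv_apply hf hs 1)
    ((integrable_fderiv_apply hf hs I).fun_smul I), integral_smul,
    integral_fderiv_apply_eq_zero hf hs, integral_fderiv_apply_eq_zero hf hs]
  simp

end Wirtinger

section MatrixRegularity

variable {V : Type*} [NormedAddCommGroup V] [NormedSpace ℝ V] {l m n : Type*} [Fintype l]
  [Fintype m] [Fintype n] {k : WithTop ℕ∞} {z : V}

theorem ContDiff.matrix_conjTranspose {M : V → Matrix m n ℂ} (hM : ContDiff ℝ k M) :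
    ContDiff ℝ k fun w => (M w)ᴴ :=
  ((conjTransposeAddEquiv m n ℂ).toRealLinearEquiv continuous_id.matrix_conjTranspose
    continuous_id.matrix_conjTranspose).contDiff.comp hM

theorem DifferentiableAt.matrix_conjTranspose {M : V → Matrix m n ℂ}
    (hM : DifferentiableAt ℝ M z) : DifferentiableAt ℝ (fun w => (M w)ᴴ) z :=
  ((conjTransposeAddEquiv m n ℂ).toRealLinearEquiv continuous_id.matrix_conjTranspose
    continuous_id.matrix_conjTranspose).differentiableAt.comp z hM

theorem ContDiff.matrix_mul {M : V → Matrix l m ℂ} {N : V → Matrix m n ℂ}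
    (hM : ContDiff ℝ k M) (hN : ContDiff ℝ k N) : ContDiff ℝ k fun w => M w * N w :=
  (mulLinearMap ℝ (l := l) (m := m) (n := n) (A := ℂ)).toContinuousBilinearMap
    |>.isBoundedBilinearMap.contDiff.comp (hM.prodMk hN)

theorem DifferentiableAt.matrix_mul {M : V → Matrix l m ℂ} {N : V → Matrix m n ℂ}
    (hM : DifferentiableAt ℝ M z) (hN : DifferentiableAt ℝ N z) :
    DifferentiableAt ℝ (fun w => M w * N w) z :=
  (mulLinearMap ℝ (l := l) (m := m) (n := n) (A := ℂ)).toContinuousBilinearMap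
    |>.isBoundedBilinearMap.differentiableAt _ |>.comp z (hM.prodMk hN)

theorem ContDiff.matrix_trace {M : V → Matrix n n ℂ} (hM : ContDiff ℝ k M) :
    ContDiff ℝ k fun w => (M w).trace :=
  (LinearMap.toContinuousLinearMap (traceLinearMap n ℝ ℂ)).contDiff.comp hM

end MatrixRegularity

section MatrixWirtinger

variable {l m n : Type*} [Fintype l] [Fintype m] [Fintype n] {z : ℂ}

theorem dz_conjTranspose {M : ℂ → Matrix m n ℂ} (hM : DifferentiableAt ℝ M z) :
    dz (fun w => (M w)ᴴ) z = (dzbar M z)ᴴ :=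
  dz_conjLinear_comp (conjTransposeLinearEquiv m n ℂ ℂ).toLinearMap
    continuous_id.matrix_conjTranspose hM

theorem dzbar_conjTranspose {M : ℂ → Matrix m n ℂ} (hM : DifferentiableAt ℝ M z) :
    dzbar (fun w => (M w)ᴴ) z = (dz M z)ᴴ :=
  dzbar_conjLinear_comp (conjTransposeLinearEquiv m n ℂ ℂ).toLinearMap
    continuous_id.matrix_conjTranspose hM

theorem dz_trace {M : ℂ → Matrix n n ℂ} (hM : DifferentiableAt ℝ M z) :
    dz (fun w => (M w).trace) z = (dz M z).trace :=
  dz_clm_comp (LinearMap.toContinuousLinearMap (traceLinearMap n ℂ ℂ)) hM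

theorem dz_mul {M : ℂ → Matrix l m ℂ} {N : ℂ → Matrix m n ℂ} (hM : DifferentiableAt ℝ M z)
    (hN : DifferentiableAt ℝ N z) :
    dz (fun w => M w * N w) z = dz M z * N z + M z * dz N z := by
  simpa using dz_bilinear (mulLinearMap ℂ).toContinuousBilinearMap hM hN

end MatrixWirtinger

section Covariant

variable {m n : Type*} [Fintype m] [Fintype n] {z : ℂ}

/-- The paper's `D_{z̄}` on adjoint-valued fields; `A` is `A_{z̄}`. -/
noncomputable def covDzbarAd (A Φ : ℂ → Matrix n n ℂ) (z : ℂ) : Matrix n n ℂ :=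
  dzbar Φ z + I • (A z * Φ z - Φ z * A z)

/-- The paper's `D_z` on adjoint-valued fields, where `A_z = A_{z̄}ᴴ`. -/
noncomputable def covDzAd (A Φ : ℂ → Matrix n n ℂ) (z : ℂ) : Matrix n n ℂ :=
  dz Φ z + I • ((A z)ᴴ * Φ z - Φ z * (A z)ᴴ)

theorem covDzAd_mul_conjTranspose_eq_zero {A : ℂ → Matrix m m ℂ} {α H : ℂ → Matrix m n ℂ}
    (hα : DifferentiableAt ℝ α z) (hH : DifferentiableAt ℝ H z)
    (hDα : dz α z + I • ((A z)ᴴ * α z) = 0) (hDH : dzbar H z + I • (A z * H z) = 0) :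
    covDzAd A (fun w => α w * (H w)ᴴ) z = 0 := by
  rw [covDzAd, dz_mul hα hH.matrix_conjTranspose, dz_conjTranspose hH,
    eq_neg_of_add_eq_zero_left hDα, eq_neg_of_add_eq_zero_left hDH]
  simp only [conjTranspose_neg, conjTranspose_smul, conjTranspose_mul, star_def, conj_I,
    Matrix.neg_mul, Matrix.mul_neg, Matrix.smul_mul, Matrix.mul_smul, Matrix.mul_assoc]
  module

theorem trace_conjTranspose_covDzbarAd_mul {A β X : ℂ → Matrix n n ℂ}
    (hβ : DifferentiableAt ℝ β z) (hX : DifferentiableAt ℝ X z) (hDX : covDzAd A X z = 0) :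
    ((covDzbarAd A (fun w => (β w)ᴴ) z)ᴴ * X z).trace = dz (fun w => (β w * X w).trace) z := by
  have hcyc : ((β z * X z) * (A z)ᴴ).trace = ((A z)ᴴ * (β z * X z)).trace := trace_mul_comm _ _
  rw [covDzbarAd, dz_trace (hβ.matrix_mul hX), dz_mul hβ hX, dzbar_conjTranspose hβ,
    eq_neg_of_add_eq_zero_left hDX]
  simp only [conjTranspose_add, conjTranspose_smul, conjTranspose_sub, conjTranspose_mul,
    conjTranspose_conjTranspose, star_def, conj_I, Matrix.add_mul, Matrix.sub_mul,
    Matrix.mul_sub, Matrix.smul_mul, Matrix.mul_smul, Matrix.mul_neg, Matrix.mul_assoc,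
    trace_add, trace_sub, trace_smul, trace_neg, smul_eq_mul] at hcyc ⊢
  linear_combination -I * hcyc

theorem integral_trace_conjTranspose_covDzbarAd_mul_eq_zero {A β X : ℂ → Matrix n n ℂ}
    (hβ : ContDiff ℝ 1 β) (hβs : HasCompactSupport β) (hX : ContDiff ℝ 1 X)
    (hDX : ∀ z, covDzAd A X z = 0) :
    ∫ z, ((covDzbarAd A (fun w => (β w)ᴴ) z)ᴴ * X z).trace = 0 := by
  simp only [trace_conjTranspose_covDzbarAd_mul (hβ.differentiable one_ne_zero _)
    (hX.differentiable one_ne_zero _) (hDX _)]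
  exact integral_dz_eq_zero (hβ.matrix_mul hX).matrix_trace <|
    hβs.mono_of_eq_zero fun z hz => by simp [hz]

theorem continuous_covDzbarAd {A Φ : ℂ → Matrix n n ℂ} (hA : Continuous A)
    (hΦ : ContDiff ℝ 1 Φ) : Continuous (covDzbarAd A Φ) :=
  hΦ.continuous_dzbar.add <|
    ((hA.matrix_mul hΦ.continuous).sub (hΦ.continuous.matrix_mul hA)).const_smul I

theorem HasCompactSupport.covDzbarAd {A Φ : ℂ → Matrix n n ℂ} (hΦ : HasCompactSupport Φ) :
    HasCompactSupport (covDzbarAd A Φ) :=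
  hΦ.dzbar.add <| hΦ.mono_of_eq_zero fun z hz => by simp [hz]

end Covariant

section Integral

variable {α : Type*} [MeasurableSpace α] {μ : Measure α} {m n : Type*} [Fintype m] [Fintype n]

theorem integrable_trace_conjTranspose_mul [TopologicalSpace α] [OpensMeasurableSpace α]
    [IsFiniteMeasureOnCompacts μ] {X Y : α → Matrix m n ℂ} (hX : Continuous X)
    (hY : Continuous Y) (hYs : HasCompactSupport Y) :
    Integrable (fun a => ((X a)ᴴ * Y a).trace) μ :=
  (hX.matrix_conjTranspose.matrix_mul hY).matrix_trace.integrable_of_hasCompactSupport <|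
    hYs.mono_of_eq_zero fun a ha => by simp [ha]

theorem trace_conjTranspose_mul_self_add_smul (X Y : Matrix m n ℂ) (c : ℂ) :
    ((X + c • Y)ᴴ * (X + c • Y)).trace = (Xᴴ * X).trace + c * (Xᴴ * Y).trace
      + conj (c * (Xᴴ * Y).trace) + conj c * c * (Yᴴ * Y).trace := by
  have hYX : (Yᴴ * X).trace = conj (Xᴴ * Y).trace := by
    rw [starRingEnd_apply, ← trace_conjTranspose, conjTranspose_mul, conjTranspose_conjTranspose]
  simp only [conjTranspose_add, conjTranspose_smul, Matrix.add_mul, Matrix.mul_add,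
    Matrix.smul_mul, Matrix.mul_smul, trace_add, trace_smul, smul_eq_mul, hYX, map_mul, star_def]
  ring

theorem integral_trace_conjTranspose_mul_self_add_smul {X Y : α → Matrix m n ℂ}
    (hXX : Integrable (fun a => ((X a)ᴴ * X a).trace) μ)
    (hXY : Integrable (fun a => ((X a)ᴴ * Y a).trace) μ)
    (hYY : Integrable (fun a => ((Y a)ᴴ * Y a).trace) μ)
    (hXY_zero : ∫ a, ((X a)ᴴ * Y a).trace ∂μ = 0) (c : ℂ) :
    ∫ a, ((X a + c • Y a)ᴴ * (X a + c • Y a)).trace ∂μ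
      = ∫ a, ((X a)ᴴ * X a).trace ∂μ + conj c * c * ∫ a, ((Y a)ᴴ * Y a).trace ∂μ := by
  have hcXY := hXY.const_mul c
  have hcXY_conj := conjCLE.toContinuousLinearMap.integrable_comp hcXY
  simp only [ContinuousLinearEquiv.coe_coe, conjCLE_apply] at hcXY_conj
  simp only [trace_conjTranspose_mul_self_add_smul]
  rw [integral_add ((hXX.fun_add hcXY).fun_add hcXY_conj) (hYY.const_mul _),
    integral_add (hXX.fun_add hcXY) hcXY_conj, integral_add hXX hcXY, integral_conj,
    integral_const_mul, integral_const_mul, hXY_zero]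
  simp

theorem integral_trace_conjTranspose_mul_self_nonneg (X : α → Matrix m n ℂ) :
    0 ≤ ∫ a, ((X a)ᴴ * X a).trace ∂μ :=
  integral_nonneg fun a => (posSemidef_conjTranspose_mul_self (X a)).trace_nonneg

theorem eq_zero_of_integral_trace_conjTranspose_mul_self_eq_zero [TopologicalSpace α]
    [μ.IsOpenPosMeasure] {X : α → Matrix m n ℂ} (hX : Continuous X)
    (hint : Integrable (fun a => ((X a)ᴴ * X a).trace) μ)
    (h : ∫ a, ((X a)ᴴ * X a).trace ∂μ = 0) (a : α) : X a = 0 := by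
  by_contra hXa
  have hpos a : 0 ≤ ((X a)ᴴ * X a).trace :=
    (posSemidef_conjTranspose_mul_self (X a)).trace_nonneg
  have hre : 0 < ∫ a, (((X a)ᴴ * X a).trace).re ∂μ :=
    integral_pos_of_integrable_nonneg_nonzero (x := a)
      (continuous_re.comp (hX.matrix_conjTranspose.matrix_mul hX).matrix_trace) hint.re
      (fun a => (Complex.nonneg_iff.1 (hpos a)).1) ?_
  · rw [← RCLike.re_eq_complex_re, integral_re hint, h] at hre
    simp at hre
  · intro hre_zero
    refine hXa (trace_conjTranspose_mul_self_eq_zero_iff.1 (Complex.ext ?_ ?_))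
    · simpa using hre_zero
    · simpa using (Complex.nonneg_iff.1 (hpos a)).2.symm

end Integral

/-- The key L² orthogonality identity in the vanishing theorem for the adjoint
fluctuation operator of BPS Yang–Mills–Chern–Simons–Higgs vortices:
`∫ tr[(D_{z̄}βᴴ + i√2·αHᴴ)ᴴ(D_{z̄}βᴴ + i√2·αHᴴ)]
  = ∫ tr[(D_{z̄}βᴴ)ᴴ(D_{z̄}βᴴ)] + 2∫ tr[(αHᴴ)ᴴ(αHᴴ)]`,
given `D_{z̄}H = 0` and `D_zα = 0`; in particular `D_{z̄}βᴴ + i√2·αHᴴ = 0`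
everywhere forces `αHᴴ = 0` and `D_{z̄}βᴴ = 0` everywhere. -/
theorem vanishing_theorem_norm_expansion (N Nf : ℕ)
    (Azbar Az : ℂ → Matrix (Fin N) (Fin N) ℂ)
    (hAzbar : Continuous Azbar) (hAz : ∀ z, Az z = (Azbar z)ᴴ)
    (H : ℂ → Matrix (Fin N) (Fin Nf) ℂ) (hH : ContDiff ℝ 1 H)
    (hDzbarH : ∀ z : ℂ, dzbar H z + Complex.I • (Azbar z * H z) = 0)
    (α : ℂ → Matrix (Fin N) (Fin Nf) ℂ) (β : ℂ → Matrix (Fin N) (Fin N) ℂ)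
    (hα : ContDiff ℝ 1 α) (hβ : ContDiff ℝ 1 β)
    (hαsupp : HasCompactSupport α) (hβsupp : HasCompactSupport β)
    (hDzα : ∀ z : ℂ, dz α z + Complex.I • (Az z * α z) = 0)
    (g aH e : ℂ → Matrix (Fin N) (Fin N) ℂ)
    (hg : ∀ z, g z = dzbar (fun w => (β w)ᴴ) z
        + Complex.I • (Azbar z * (β z)ᴴ - (β z)ᴴ * Azbar z))
    (haH : ∀ z, aH z = α z * (H z)ᴴ)
    (he : ∀ z, e z = g z + (Complex.I * (Real.sqrt 2 : ℂ)) • aH z) :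
    ((∫ z : ℂ, ((e z)ᴴ * e z).trace)
      = (∫ z : ℂ, ((g z)ᴴ * g z).trace) + 2 * (∫ z : ℂ, ((aH z)ᴴ * aH z).trace)) ∧
    ((∀ z : ℂ, e z = 0) → ∀ z : ℂ, aH z = 0 ∧ g z = 0) := by
  have hg_def : g = covDzbarAd Azbar (fun w => (β w)ᴴ) := funext hg
  have haH_def : aH = fun z => α z * (H z)ᴴ := funext haH
  have haH_smooth : ContDiff ℝ 1 aH := haH_def ▸ hα.matrix_mul hH.matrix_conjTranspose
  have haH_supp : HasCompactSupport aH := hαsupp.mono_of_eq_zero fun z hz => by simp [haH, hz]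
  have hg_cont : Continuous g := hg_def ▸ continuous_covDzbarAd hAzbar hβ.matrix_conjTranspose
  have hg_supp : HasCompactSupport g := hg_def ▸ (hβsupp.comp_left conjTranspose_zero).covDzbarAd
  have hDaH z : covDzAd Azbar aH z = 0 := haH_def ▸ covDzAd_mul_conjTranspose_eq_zero
    (hα.differentiable one_ne_zero z) (hH.differentiable one_ne_zero z) (hAz z ▸ hDzα z)
    (hDzbarH z)
  have hcross : ∫ z, ((g z)ᴴ * aH z).trace = 0 :=
    hg_def ▸ integral_trace_conjTranspose_covDzbarAd_mul_eq_zero hβ hβsupp haH_smooth hDaH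
  have hgg := integrable_trace_conjTranspose_mul (μ := volume) hg_cont hg_cont hg_supp
  have hgaH := integrable_trace_conjTranspose_mul (μ := volume) hg_cont haH_smooth.continuous
    haH_supp
  have haHaH := integrable_trace_conjTranspose_mul (μ := volume) haH_smooth.continuous
    haH_smooth.continuous haH_supp
  have hc : conj (I * (Real.sqrt 2 : ℂ)) * (I * (Real.sqrt 2 : ℂ)) = 2 := by
    simp [← ofReal_mul, ← mul_assoc, mul_comm _ I]
  have hexpand : ∫ z, ((e z)ᴴ * e z).trace
      = (∫ z, ((g z)ᴴ * g z).trace) + 2 * ∫ z, ((aH z)ᴴ * aH z).trace := by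
    simp only [he]
    rw [integral_trace_conjTranspose_mul_self_add_smul hgg hgaH haHaH hcross, hc]
  refine ⟨hexpand, fun he_zero z => ?_⟩
  obtain ⟨hg_zero, haH_zero⟩ := (add_eq_zero_iff_of_nonneg
    (integral_trace_conjTranspose_mul_self_nonneg (μ := volume) g)
    (mul_nonneg zero_le_two (integral_trace_conjTranspose_mul_self_nonneg (μ := volume) aH))).1
    (by simp [← hexpand, he_zero])
  exact ⟨eq_zero_of_integral_trace_conjTranspose_mul_self_eq_zero haH_smooth.continuous haHaH
      ((mul_eq_zero.1 haH_zero).resolve_left two_ne_zero) z,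
    eq_zero_of_integral_trace_conjTranspose_mul_self_eq_zero hg_cont hgg hg_zero z⟩
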